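/- arXiv:2512.22410 — 4 statements merged into one kernel-verified Lean document; each statement's English description precedes it below -/
import Mathlib

section
/- Let G be a finite group, p a prime, and M a proper subgroup of G whose order is divisible by p^{e+1} and such that M contains the normalizer N_G(P) for every p-subgroup P of M with |P| > p^e. Then for every Sylow p-subgroup S of M, S is in fact a Sylow p-subgroup of G. -/
/-!
Let `S'` be the image of `S` in `G`. It has order at least `p ^ (e + 1)`, so `N_G(S') ≤ M`. If
`S'` were properly contained in a `p`-subgroup `Q` of `G`, then, normalizers growing in the
nilpotent group `Q`, `N_G(S') ⊓ Q` would be a `p`-subgroup of `M` properly containing `S'`,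
against the maximality of `S` in `M`.
-/

open Subgroup

namespace Subgroup

variable {G : Type*} [Group G]

theorem lt_normalizer_inf_of_lt {H K : Subgroup G} [Group.IsNilpotent K] (hHK : H < K) :
    H < normalizer (H : Set G) ⊓ K := by
  have hlt : H.subgroupOf K < normalizer (H.subgroupOf K : Set K) :=
    Group.normalizerCondition_of_isNilpotent _
      (by rw [lt_top_iff_ne_top, Ne, subgroupOf_eq_top]; exact hHK.not_ge)
  rw [← subgroupOf_normalizer_eq hHK.le, ← map_subtype_lt_map_subtype, subgroupOf_map_subtype,
    subgroupOf_map_subtype, inf_of_le_left hHK.le] at hlt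
  exact hlt

end Subgroup

namespace Sylow

variable {G : Type*} [Group G] {p : ℕ} {M : Subgroup G}

theorem eq_map_subtype_of_le (S : Sylow p M) {P : Subgroup G} (hP : IsPGroup p P)
    (hSP : (S : Subgroup M).map M.subtype ≤ P) (hPM : P ≤ M) :
    P = (S : Subgroup M).map M.subtype := by
  have hS : P.subgroupOf M = S :=
    S.is_maximal' hP.comap_subtype (map_le_iff_le_comap.mp hSP)
  rw [← hS, subgroupOf_map_subtype, inf_of_le_left hPM]

theorem exists_eq_map_subtype_of_normalizer_le [Finite G] [Fact p.Prime] (S : Sylow p M)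
    (hN : normalizer ((S : Subgroup M).map M.subtype : Set G) ≤ M) :
    ∃ T : Sylow p G, (T : Subgroup G) = (S : Subgroup M).map M.subtype := by
  set S' := (S : Subgroup M).map M.subtype
  refine ⟨⟨S', S.isPGroup'.map M.subtype, fun {Q} hQ hS'Q => ?_⟩, rfl⟩
  by_contra hne
  have := hQ.isNilpotent
  have hlt : S' < normalizer (S' : Set G) ⊓ Q :=
    lt_normalizer_inf_of_lt (lt_of_le_of_ne hS'Q (Ne.symm hne))
  exact hlt.ne' (S.eq_map_subtype_of_le (hQ.to_le inf_le_right) hlt.le (inf_le_left.trans hN))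

end Sylow

theorem stmt0_general {G : Type*} [Group G] [Fintype G] (p : ℕ) [Fact p.Prime] (e : ℕ)
    (M : Subgroup G)
    (hdvdM : p ^ (e + 1) ∣ Nat.card M)
    (hnorm : ∀ P : Subgroup G, P ≤ M → IsPGroup p P → p ^ e < Nat.card P →
      Subgroup.normalizer (P : Set G) ≤ M) :
    ∀ S : Sylow p M, ∃ T : Sylow p G,
      Subgroup.map M.subtype (S : Subgroup M) = (T : Subgroup G) := by
  intro S
  have hcard : p ^ e < Nat.card ((S : Subgroup M).map M.subtype) := by
    rw [card_map_of_injective M.subtype_injective]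
    exact (Nat.pow_lt_pow_succ (Fact.out : p.Prime).one_lt).trans_le
      (Nat.le_of_dvd Nat.card_pos (S.pow_dvd_card_of_pow_dvd_card hdvdM))
  obtain ⟨T, hT⟩ := S.exists_eq_map_subtype_of_normalizer_le
    (hnorm _ (map_subtype_le _) (S.isPGroup'.map M.subtype) hcard)
  exact ⟨T, hT.symm⟩

/-- If `M < G` is a proper subgroup with `p^(e+1) ∣ |M|` such that `M`
contains `N_G(P)` for every `p`-subgroup `P ≤ M` with `|P| > p^e`, then every Sylow
`p`-subgroup of `M` is a Sylow `p`-subgroup of `G`. -/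
theorem stmt0 {G : Type*} [Group G] [Fintype G] (p : ℕ) [Fact p.Prime] (e : ℕ)
    (M : Subgroup G) (hM : M ≠ ⊤)
    (hdvdG : p ^ (e + 1) ∣ Nat.card G)
    (hdvdM : p ^ (e + 1) ∣ Nat.card M)
    (hnorm : ∀ P : Subgroup G, P ≤ M → IsPGroup p P → p ^ e < Nat.card P →
      Subgroup.normalizer (P : Set G) ≤ M) :
    ∀ S : Sylow p M, ∃ T : Sylow p G,
      Subgroup.map M.subtype (S : Subgroup M) = (T : Subgroup G) :=
  stmt0_general p e M hdvdM hnorm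
end

section
/- Let G be a finite group, p a prime, e ≥ 0, and M a proper subgroup of G such that M contains N_G(S) for some Sylow p-subgroup S of G, and such that for every p-subgroup P of M with |P| > p^e, every p-subgroup Q of G containing P lies in M. Then M is strongly p^{e+1}-embedded in G, i.e. p^{e+1} divides |M| and p^{e+1} does not divide |M ∩ M^x| for every x ∈ G \ M. -/
/-!
A `p`-subgroup `R` of `M ∩ M^x` of order `p^(e+1)` lies in `M`, and `xRx⁻¹` lies in `M`
too. By hypothesis, Sylow subgroups `T ≥ R` and `x • T ≥ xRx⁻¹` of `G` then both lie in `M`,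
so they are conjugate in `M`; since every Sylow subgroup of `G` inside `M` is `M`-conjugate to
`S`, and `N_G(S) ≤ M`, this forces `x ∈ M`.
-/

open Pointwise Subgroup

namespace Sylow

variable {G : Type*} [Group G] {p : ℕ} [Fact p.Prime]

theorem exists_mem_smul_eq_of_le {M : Subgroup G} [Finite M] {T T' : Sylow p G}
    (hT : (T : Subgroup G) ≤ M) (hT' : (T' : Subgroup G) ≤ M) : ∃ m ∈ M, m • T = T' := by
  obtain ⟨m, hm⟩ := MulAction.exists_smul_eq M (T.subtype hT) (T'.subtype hT')
  rw [smul_subtype] at hm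
  exact ⟨m, m.2, subtype_injective hm⟩

/-- Frattini argument: `T` and `x • T` are conjugate inside `M`, so `x` differs from an element
of `M` by an element of a conjugate of `N_G(S)`. -/
theorem mem_of_smul_le_of_normalizer_le {M : Subgroup G} [Finite M] {S T : Sylow p G}
    (hS : normalizer (S : Set G) ≤ M) (hT : (T : Subgroup G) ≤ M) {x : G}
    (hxT : ((x • T : Sylow p G) : Subgroup G) ≤ M) : x ∈ M := by
  have hSM : (S : Subgroup G) ≤ M := le_normalizer.trans hS
  obtain ⟨a, ha, rfl⟩ := exists_mem_smul_eq_of_le hSM hT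
  obtain ⟨b, hb, hbx⟩ := exists_mem_smul_eq_of_le hSM hxT
  have hn : b⁻¹ * x * a ∈ normalizer (S : Set G) :=
    smul_eq_iff_mem_normalizer.mp (by rw [mul_smul, mul_smul, ← hbx, inv_smul_smul])
  convert mul_mem (mul_mem hb (hS hn)) (inv_mem ha) using 1
  group

end Sylow

theorem Subgroup.exists_isPGroup_le_card_eq {G : Type*} [Group G] {p n : ℕ} [Fact p.Prime]
    (H : Subgroup G) [Finite H] (hdvd : p ^ n ∣ Nat.card H) :
    ∃ P ≤ H, IsPGroup p P ∧ Nat.card P = p ^ n := by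
  obtain ⟨P, hP⟩ := Sylow.exists_subgroup_card_pow_prime p hdvd
  have hcard : Nat.card (P.map H.subtype) = p ^ n := by
    rw [card_map_of_injective H.subtype_injective, hP]
  exact ⟨P.map H.subtype, map_subtype_le P, IsPGroup.of_card hcard, hcard⟩

theorem mem_of_conj_pGroup_le {G : Type*} [Group G] [Finite G] {p : ℕ} [Fact p.Prime] {e : ℕ}
    {M : Subgroup G} {S : Sylow p G} (hS : normalizer (S : Set G) ≤ M)
    (hup : ∀ P Q : Subgroup G, P ≤ M → IsPGroup p P → p ^ e < Nat.card P →
      IsPGroup p Q → P ≤ Q → Q ≤ M)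
    {P : Subgroup G} (hP : IsPGroup p P) (hcard : p ^ e < Nat.card P) (hPM : P ≤ M) {x : G}
    (hxP : MulAut.conj x • P ≤ M) : x ∈ M := by
  obtain ⟨T, hPT⟩ := hP.exists_le_sylow
  have hTM : (T : Subgroup G) ≤ M := hup P T hPM hP hcard T.isPGroup' hPT
  have hxTM : ((x • T : Sylow p G) : Subgroup G) ≤ M :=
    hup _ _ hxP (hP.of_equiv (equivSMul _ P))
      (by rwa [← Nat.card_congr (equivSMul _ P).toEquiv])
      (x • T).isPGroup' (pointwise_smul_le_pointwise_smul_iff.mpr hPT)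
  exact Sylow.mem_of_smul_le_of_normalizer_le hS hTM hxTM

theorem stmt1_general {G : Type*} [Group G] [Fintype G] (p : ℕ) [Fact p.Prime] (e : ℕ)
    (M : Subgroup G)
    (hdvdG : p ^ (e + 1) ∣ Nat.card G)
    (hS : ∃ S : Sylow p G, Subgroup.normalizer ((S : Subgroup G) : Set G) ≤ M)
    (hup : ∀ P Q : Subgroup G, P ≤ M → IsPGroup p P → p ^ e < Nat.card P →
      IsPGroup p Q → P ≤ Q → Q ≤ M) :
    p ^ (e + 1) ∣ Nat.card M ∧
      ∀ x : G, x ∉ M → ¬ p ^ (e + 1) ∣ Nat.card ↥(M ⊓ (MulAut.conj x⁻¹ • M)) := by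
  obtain ⟨S, hNS⟩ := hS
  refine ⟨(S.pow_dvd_card_of_pow_dvd_card hdvdG).trans (card_dvd_of_le (le_normalizer.trans hNS)),
    fun x hx hdvd => hx ?_⟩
  obtain ⟨P, hPK, hP, hcard⟩ := exists_isPGroup_le_card_eq _ hdvd
  have hxP : MulAut.conj x • P ≤ M := by
    rw [pointwise_smul_subset_iff, ← map_inv]
    exact hPK.trans inf_le_right
  exact mem_of_conj_pGroup_le hNS hup hP (hcard ▸ Nat.pow_lt_pow_succ (Fact.out : p.Prime).one_lt)
    (hPK.trans inf_le_left) hxP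

/-- If a proper subgroup `M < G` contains `N_G(S)` for some Sylow
`p`-subgroup `S` of `G`, and every `p`-subgroup `Q` of `G` containing some `p`-subgroup
`P ≤ M` with `|P| > p^e` lies in `M`, then `M` is strongly `p^(e+1)`-embedded in `G`. -/
theorem stmt1 {G : Type*} [Group G] [Fintype G] (p : ℕ) [Fact p.Prime] (e : ℕ)
    (M : Subgroup G) (hM : M ≠ ⊤)
    (hdvdG : p ^ (e + 1) ∣ Nat.card G)
    (hS : ∃ S : Sylow p G, Subgroup.normalizer ((S : Subgroup G) : Set G) ≤ M)
    (hup : ∀ P Q : Subgroup G, P ≤ M → IsPGroup p P → p ^ e < Nat.card P →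
      IsPGroup p Q → P ≤ Q → Q ≤ M) :
    p ^ (e + 1) ∣ Nat.card M ∧
      ∀ x : G, x ∉ M → ¬ p ^ (e + 1) ∣ Nat.card ↥(M ⊓ (MulAut.conj x⁻¹ • M)) :=
  stmt1_general p e M hdvdG hS hup
end

section
/- Let G be a finite group, p a prime, and M a strongly p^{e+1}-embedded subgroup of G (for some integer e ≥ 0). Then the index |G : M| is congruent to 1 modulo p; in particular p does not divide |G : M| and M contains a Sylow p-subgroup of G. -/
open Pointwise

/-- If `M` is a strongly `p^(e+1)`-embedded (proper) subgroup of a finite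
group `G`, then `|G : M| ≡ 1 (mod p)`; in particular `p ∤ |G : M|` and `M` contains a
Sylow `p`-subgroup of `G`. -/
theorem stmt2 {G : Type*} [Group G] [Fintype G] (p : ℕ) [Fact p.Prime] (e : ℕ)
    (M : Subgroup G) (hM : M ≠ ⊤)
    (hdvdM : p ^ (e + 1) ∣ Nat.card M)
    (hemb : ∀ x : G, x ∉ M → ¬ p ^ (e + 1) ∣ Nat.card ↥(M ⊓ (MulAut.conj x⁻¹ • M))) :
    M.index ≡ 1 [MOD p] ∧ ¬ p ∣ M.index ∧ ∃ S : Sylow p G, (S : Subgroup G) ≤ M := by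
  classical
  have hp := (Fact.out : p.Prime)
  -- a subgroup Q of M with |Q| = p^(e+1)
  obtain ⟨Q', hQ'card⟩ := Sylow.exists_subgroup_card_pow_prime (G := ↥M) p hdvdM
  set Q : Subgroup G := Q'.map M.subtype with hQdef
  have hQM : Q ≤ M := Subgroup.map_subtype_le Q'
  have hQcard : Nat.card Q = p ^ (e + 1) := by
    rw [hQdef, ← hQ'card]
    exact (Nat.card_congr (Subgroup.equivMapOfInjective Q' M.subtype M.subtype_injective).toEquiv).symm
  have hQp : IsPGroup p Q := IsPGroup.of_card hQcard
  -- fixed points of Q acting on G ⧸ M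
  have hfix : MulAction.fixedPoints ↥Q (G ⧸ M) = {QuotientGroup.mk (1 : G)} := by
    ext z
    obtain ⟨x, rfl⟩ := QuotientGroup.mk_surjective z
    simp only [Set.mem_singleton_iff, MulAction.mem_fixedPoints]
    constructor
    · intro h
      by_contra hx1
      have hx : x ∉ M := fun hxM =>
        hx1 (QuotientGroup.eq.mpr (by simpa using M.inv_mem hxM))
      -- for each q ∈ Q, x⁻¹ q x ∈ M
      have key : ∀ q ∈ Q, x⁻¹ * q * x ∈ M := by
        intro q hq
        have := h ⟨q, hq⟩
        have hq' : (q : G) • (QuotientGroup.mk x : G ⧸ M) = QuotientGroup.mk x := this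
        rw [MulAction.Quotient.smul_mk, QuotientGroup.eq] at hq'
        simpa [mul_assoc] using M.inv_mem hq'
      refine hemb x hx ?_
      have hK : (MulAut.conj x⁻¹ • Q : Subgroup G) ≤ M ⊓ (MulAut.conj x⁻¹ • M) := by
        refine le_inf ?_ ((Subgroup.pointwise_smul_le_pointwise_smul_iff).mpr hQM)
        intro m hm
        rw [Subgroup.mem_pointwise_smul_iff_inv_smul_mem] at hm
        have := key _ hm
        simpa [MulAut.smul_def, MulAut.conj_apply, mul_assoc] using this
      have hKcard : Nat.card ↥(MulAut.conj x⁻¹ • Q : Subgroup G) = p ^ (e + 1) := by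
        rw [← hQcard]
        exact (Nat.card_congr (Subgroup.equivSMul (MulAut.conj x⁻¹) Q).toEquiv).symm
      exact hKcard ▸ Subgroup.card_dvd_of_le hK
    · intro hx1
      rintro ⟨q, hq⟩
      show (q : G) • (QuotientGroup.mk x : G ⧸ M) = QuotientGroup.mk x
      rw [MulAction.Quotient.smul_mk, QuotientGroup.eq]
      have hxM : x ∈ M := by simpa using M.inv_mem (QuotientGroup.eq.mp hx1)
      simp only [smul_eq_mul, mul_inv_rev]
      exact M.mul_mem (M.mul_mem (M.inv_mem hxM) (M.inv_mem (hQM hq))) hxM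
  have hmod : M.index ≡ 1 [MOD p] := by
    have h1 : Nat.card (MulAction.fixedPoints ↥Q (G ⧸ M)) = 1 := by
      rw [hfix]; simp
    have := hQp.card_modEq_card_fixedPoints (G ⧸ M)
    rwa [h1, ← Subgroup.index] at this
  have hndvd : ¬ p ∣ M.index := by
    intro hdvd
    have h0 : M.index % p = 0 := Nat.eq_zero_of_dvd_of_lt (Nat.dvd_mod_iff dvd_rfl |>.mpr hdvd) (Nat.mod_lt _ hp.pos)
    have h1 : M.index % p = 1 % p := hmod
    rw [Nat.mod_eq_of_lt hp.one_lt] at h1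
    omega
  refine ⟨hmod, hndvd, ?_⟩
  -- a Sylow p-subgroup of M is a Sylow p-subgroup of G
  obtain ⟨P⟩ : Nonempty (Sylow p ↥M) := inferInstance
  set P' : Subgroup G := (P : Subgroup ↥M).map M.subtype with hP'def
  have hP'p : IsPGroup p P' := P.isPGroup'.map M.subtype
  obtain ⟨S, hPS⟩ := hP'p.exists_le_sylow
  have hfact : (Nat.card G).factorization p = (Nat.card ↥M).factorization p := by
    have hmul : Nat.card ↥M * M.index = Nat.card G := M.card_mul_index
    have hM0 : Nat.card ↥M ≠ 0 := Nat.card_pos.ne'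
    have hI0 : M.index ≠ 0 := Subgroup.index_ne_zero_of_finite
    rw [← hmul, Nat.factorization_mul hM0 hI0]
    simp [Nat.factorization_eq_zero_of_not_dvd hndvd]
  have hcardP' : Nat.card P' = Nat.card S := by
    have h1 : Nat.card P' = Nat.card ↥(P : Subgroup ↥M) :=
      (Nat.card_congr
        (Subgroup.equivMapOfInjective _ M.subtype M.subtype_injective).toEquiv).symm
    rw [h1, P.card_eq_multiplicity, S.card_eq_multiplicity, hfact]
  have : P' = (S : Subgroup G) := by
    have : Finite ↥(S : Subgroup G) := inferInstance
    exact Subgroup.eq_of_le_of_card_ge hPS (le_of_eq hcardP'.symm)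
  exact ⟨S, this ▸ Subgroup.map_subtype_le _⟩
end

section
/- Let G be a finite group and M ≤ G a subgroup such that p divides |M : M ∩ M^x| for every x ∈ G \ M (p prime). Then |G : M| ≡ 1 (mod p). (The index |G:M| is the sum over double cosets MxM of |M : M ∩ M^x|, and the only double coset contributing 1 is M itself.) -/
/-!
Let `M` act on `G ⧸ M` by left multiplication. The orbit of the coset `gM` has size
`|M : M ∩ M^{g⁻¹}|`, because its stabilizer is `M ∩ gMg⁻¹`. The trivial coset is a fixed point,
and every other coset is `x⁻¹M` with `x ∉ M`, so its orbit has size divisible by `p`. Splitting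
`G ⧸ M` into orbits gives `|G : M| ≡ 1 (mod p)`.
-/

open Pointwise MulAction

theorem MulAction.natCard_modEq_natCard_orbit_of_dvd {G α : Type*} [Group G] [MulAction G α]
    [Finite α] {n : ℕ} (a₀ : α) (h : ∀ a ∉ orbit G a₀, n ∣ Nat.card (orbit G a)) :
    Nat.card α ≡ Nat.card (orbit G a₀) [MOD n] := by
  classical
  have := Fintype.ofFinite (orbitRel.Quotient G α)
  rw [← ZMod.natCast_eq_natCast_iff, Nat.card_congr (selfEquivSigmaOrbits' G α), Nat.card_sigma,
    Nat.cast_sum, Finset.sum_eq_single (⟦a₀⟧ : orbitRel.Quotient G α)]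
  · rw [orbitRel.Quotient.orbit_mk]
  · intro ω _ hω
    rw [orbitRel.Quotient.orbit_eq_orbit_out ω Quotient.out_eq', ZMod.natCast_eq_zero_iff]
    refine h _ fun hmem => hω ?_
    rw [← Quotient.out_eq' ω]
    exact Quotient.sound' (orbitRel_apply.mpr hmem)
  · simp

theorem Subgroup.natCard_orbit_coset_eq_relIndex {G : Type*} [Group G] (H K : Subgroup G)
    (g : G) : Nat.card (orbit K (g : G ⧸ H)) = (MulAut.conj g • H).relIndex K := by
  have hstab : stabilizer G (g : G ⧸ H) = MulAut.conj g • H := by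
    have hg : (g : G ⧸ H) = g • ((1 : G) : G ⧸ H) := by simp
    rw [hg, stabilizer_smul_eq_stabilizer_map_conj, stabilizer_quotient]
    rfl
  rw [Nat.card_coe_set_eq, ← index_stabilizer, Subgroup.relIndex, ← hstab]
  rfl

theorem stmt19_general {G : Type*} [Group G] [Fintype G] (p : ℕ)
    (M : Subgroup G)
    (h : ∀ x : G, x ∉ M → p ∣ (MulAut.conj x⁻¹ • M).relIndex M) :
    M.index ≡ 1 [MOD p] := by
  have hdvd : ∀ a ∉ orbit M ((1 : G) : G ⧸ M), p ∣ Nat.card (orbit M a) := by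
    intro a ha
    obtain ⟨g, rfl⟩ := QuotientGroup.mk_surjective a
    have hg : g⁻¹ ∉ M := fun hg => ha ⟨⟨g, by simpa using hg⟩, congrArg _ (mul_one g)⟩
    rw [Subgroup.natCard_orbit_coset_eq_relIndex]
    simpa using h g⁻¹ hg
  have hone : Nat.card (orbit M ((1 : G) : G ⧸ M)) = 1 := by
    rw [Subgroup.natCard_orbit_coset_eq_relIndex, map_one, one_smul, Subgroup.relIndex_self]
  rw [Subgroup.index, ← hone]
  exact natCard_modEq_natCard_orbit_of_dvd _ hdvd

/-- If `M ≤ G` satisfies `p ∣ |M : M ∩ M^x|` for every `x ∉ M`, then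
`|G : M| ≡ 1 (mod p)`. -/
theorem stmt19 {G : Type*} [Group G] [Fintype G] (p : ℕ) [Fact p.Prime]
    (M : Subgroup G)
    (h : ∀ x : G, x ∉ M → p ∣ (MulAut.conj x⁻¹ • M).relIndex M) :
    M.index ≡ 1 [MOD p] :=
  stmt19_general p M h
end
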